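/- For 1 ≤ k ≤ n, the set Γ_k = {λ ∈ ℝ^n : S_j(λ) ≥ 0, j = 1,...,k} equals the set {λ ∈ ℝ^n : S_k(λ + η) ≥ 0 for all η ∈ ℝ^n with η_i ≥ 0 for all i}. -/

import Mathlib

/-- The `k`-th elementary symmetric polynomial of `l : Fin n → ℝ`. -/
noncomputable def esymmS (n k : ℕ) (l : Fin n → ℝ) : ℝ :=
  ∑ A ∈ Finset.powersetCard k (Finset.univ : Finset (Fin n)), ∏ i ∈ A, l i

/-!
Write `S_j(λ | i)` for `S_j` of `λ` with the coordinate `λ_i` removed, so that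
`S_{j+1}(λ) = S_{j+1}(λ | i) + λ_i S_j(λ | i)`.

If `λ ∈ Γ_k` then `S_j(λ | i) ≥ 0` for `j < k`: at the first index `r + 1` where this fails,
the identities at `r + 1` and `r + 2` force `S_{r+1}(λ | i)² ≤ S_r(λ | i) S_{r+2}(λ | i)`,
which contradicts Newton's inequality (proved by differentiating `∏ (X - λ_i)` and Rolle's
theorem). Since `S_j(λ | i)` is the derivative of `S_{j+1}` in the direction `e_i`, raising a
coordinate keeps `λ` in `Γ_k`, and so `S_k(λ + η) ≥ 0`.

Conversely, if `S_k(λ + η) ≥ 0` for all `η ≥ 0`, then sending `η_i → ∞` shows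
`S_{k-1}(λ + η | i) ≥ 0` for each `i`, and summing over `i` gives
`(n - k + 1) S_{k-1}(λ + η) ≥ 0`. Descending in `k` gives `λ ∈ Γ_k`.
-/

open Finset

theorem Nat.choose_mul_choose_add_two_lt_sq {M r : ℕ} (h : r + 2 ≤ M) :
    M.choose r * M.choose (r + 2) < M.choose (r + 1) ^ 2 := by
  obtain ⟨d, rfl⟩ := Nat.exists_eq_add_of_le h
  have h1 := Nat.choose_succ_right_eq (r + 2 + d) r
  have h2 := Nat.choose_succ_right_eq (r + 2 + d) (r + 1)
  rw [show r + 2 + d - r = d + 2 by omega] at h1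
  rw [show r + 2 + d - (r + 1) = d + 1 by omega] at h2
  have hc0 := Nat.choose_pos (show r ≤ r + 2 + d by omega)
  have hc1 := Nat.choose_pos (show r + 1 ≤ r + 2 + d by omega)
  set c0 := (r + 2 + d).choose r
  set c1 := (r + 2 + d).choose (r + 1)
  set c2 := (r + 2 + d).choose (r + 2)
  refine Nat.lt_of_mul_lt_mul_right (a := (r + 1) * (r + 2)) ?_
  calc c0 * c2 * ((r + 1) * (r + 2)) = c0 * c1 * ((r + 1) * (d + 1)) := by
        rw [show c0 * c2 * ((r + 1) * (r + 2)) = c0 * (r + 1) * (c2 * (r + 1 + 1)) by ring, h2]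
        ring
    _ < c0 * c1 * ((d + 2) * (r + 2)) := Nat.mul_lt_mul_of_pos_left (by nlinarith) (by positivity)
    _ = c1 ^ 2 * ((r + 1) * (r + 2)) := by
        rw [show c1 ^ 2 * ((r + 1) * (r + 2)) = c1 * (r + 2) * (c1 * (r + 1)) by ring, h1]
        ring

namespace Finset

variable {ι : Type*} [DecidableEq ι]

theorem sum_esymm_map_val_erase (A : Finset ι) (v : ι → ℝ) (j : ℕ) :
    ∑ i ∈ A, ((A.erase i).val.map v).esymm j = (#A - j : ℝ) * (A.val.map v).esymm j := by
  have herase : ∀ i, (A.erase i).powersetCard j = (A.powersetCard j).filter (i ∉ ·) := by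
    intro i; ext B; simp only [mem_powersetCard, mem_filter, subset_erase]; tauto
  simp only [esymm_map_val, herase, sum_filter, mul_sum]
  rw [sum_comm]
  refine sum_congr rfl fun B hB => ?_
  obtain ⟨hBA, hB⟩ := mem_powersetCard.1 hB
  rw [← sum_filter, sum_const, nsmul_eq_mul, filter_not, filter_mem_eq_inter,
    inter_eq_right.2 hBA, card_sdiff_of_subset hBA, Nat.cast_sub (card_le_card hBA), hB]

theorem esymm_map_val_card_pred {A : Finset ι} {m : ℕ} (hA : #A = m + 1) (v : ι → ℝ) :
    (A.val.map v).esymm m = ∑ i ∈ A, ∏ x ∈ A.erase i, v x := by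
  have hcomp : A.powersetCard m = A.image A.erase := by
    ext B
    simp only [mem_powersetCard, mem_image]
    constructor
    · rintro ⟨hBA, hB⟩
      obtain ⟨a, ha⟩ :=
        card_eq_one.1 (show #(A \ B) = 1 by rw [card_sdiff_of_subset hBA]; omega)
      have haA : a ∈ A := (mem_sdiff.1 (ha ▸ mem_singleton_self a)).1
      exact ⟨a, haA, by rw [erase_eq, ← ha, sdiff_sdiff_eq_self hBA]⟩
    · rintro ⟨i, hi, rfl⟩
      exact ⟨erase_subset i A, by rw [card_erase_of_mem hi, hA]; rfl⟩
  rw [esymm_map_val, hcomp, sum_image fun x hx y _ => (erase_inj A hx).1]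

theorem mul_esymm_map_val_le_of_card_eq {A : Finset ι} {r : ℕ} (hA : #A = r + 2)
    (v : ι → ℝ) :
    2 * (r + 2) * ((A.val.map v).esymm r * (A.val.map v).esymm (r + 2))
      ≤ (r + 1) * (A.val.map v).esymm (r + 1) ^ 2 := by
  set Q : ι → ℝ := fun i => ∏ x ∈ A.erase i, v x
  have htop : (A.val.map v).esymm (r + 2) = ∏ x ∈ A, v x := by
    rw [esymm_map_val, ← hA, powersetCard_self, sum_singleton]
  have hQQ : ∀ i ∈ A, ∀ j ∈ A.erase i,
      (∏ x ∈ A, v x) * ∏ x ∈ (A.erase i).erase j, v x = Q i * Q j := by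
    intro i hi j hj
    have hjA : j ∈ A := mem_of_mem_erase hj
    have hij : i ∈ A.erase j := mem_erase.2 ⟨(ne_of_mem_erase hj).symm, hi⟩
    simp only [Q, ← mul_prod_erase _ v hi, ← mul_prod_erase _ v hj, ← mul_prod_erase _ v hij,
      erase_right_comm (s := A) (a := i) (b := j)]
    ring
  -- `2 e_r = ∑ᵢ e_r(A.erase i)`, and `e_r(A.erase i)` sums over one more omitted index `j`,
  -- whose term times `∏ v` is `Q i * Q j`.
  have hlow : (∏ x ∈ A, v x) * (2 * (A.val.map v).esymm r)
      = (∑ i ∈ A, Q i) ^ 2 - ∑ i ∈ A, Q i ^ 2 := by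
    have h2 := sum_esymm_map_val_erase A v r
    rw [hA, show ((r + 2 : ℕ) : ℝ) - r = 2 by push_cast; ring] at h2
    rw [← h2, mul_sum, sq, sum_mul_sum, ← sum_sub_distrib]
    refine sum_congr rfl fun i hi => ?_
    rw [esymm_map_val_card_pred (by rw [card_erase_of_mem hi, hA]; rfl) v, mul_sum,
      sum_congr rfl (hQQ i hi), ← sum_erase_add A _ hi]
    ring
  have hcs : (∑ i ∈ A, Q i) ^ 2 ≤ (r + 2) * ∑ i ∈ A, Q i ^ 2 := by
    have := sq_sum_le_card_mul_sum_sq (s := A) (f := Q)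
    rwa [hA, Nat.cast_add, Nat.cast_two] at this
  rw [esymm_map_val_card_pred hA v, htop]
  nlinarith [sq_nonneg (∑ i ∈ A, Q i)]

end Finset

namespace Multiset

theorem esymm_cons_succ {R : Type*} [CommSemiring R] (a : R) (s : Multiset R) (j : ℕ) :
    (a ::ₘ s).esymm (j + 1) = s.esymm (j + 1) + a * s.esymm j := by
  simp [esymm, map_map, sum_map_mul_left]

theorem esymm_eq_zero_of_card_lt {R : Type*} [CommSemiring R] {s : Multiset R} {j : ℕ}
    (h : card s < j) : s.esymm j = 0 := by
  simp [esymm, powersetCard_eq_empty _ h]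

open Polynomial in
theorem exists_roots_derivative_esymm {s : Multiset ℝ} (hs : 0 < card s) :
    ∃ t : Multiset ℝ, card t + 1 = card s ∧
      ∀ j < card s, (card s : ℝ) * t.esymm j = (card s - j) * s.esymm j := by
  set N := card s
  set P : ℝ[X] := (s.map fun a => X - C a).prod
  have hP : P.Monic := monic_multiset_prod_of_monic _ _ fun a _ => monic_X_sub_C a
  have hdeg : P.natDegree = N := natDegree_multiset_prod_X_sub_C_eq_card s
  have hcoeff : ∀ j ≤ N, P.coeff (N - j) = (-1) ^ j * s.esymm j := fun j hj => by
    rw [prod_X_sub_C_coeff s (Nat.sub_le N j), Nat.sub_sub_self hj]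
  -- Rolle: `P'` has at least `N - 1` real roots, hence exactly `N - 1`.
  have hroots : card (derivative P).roots = (derivative P).natDegree ∧
      (derivative P).natDegree = N - 1 := by
    have h1 := card_roots_le_derivative P
    have h2 := card_roots' (derivative P)
    have h3 := natDegree_derivative_le P
    rw [roots_multiset_prod_X_sub_C] at h1
    omega
  obtain ⟨hroots, hdeg'⟩ := hroots
  refine ⟨(derivative P).roots, by omega, fun j hj => ?_⟩
  have hlead : (derivative P).leadingCoeff = N := by
    rw [leadingCoeff, hdeg', coeff_derivative, Nat.sub_add_cancel hs, ← hdeg,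
      hP.coeff_natDegree]
    simp [hdeg, Nat.cast_sub hs]
  have key := coeff_eq_esymm_roots_of_card hroots (k := N - 1 - j) (by omega)
  rw [coeff_derivative, hdeg', hlead, show N - 1 - j + 1 = N - j by omega, hcoeff j hj.le,
    show N - 1 - (N - 1 - j) = j by omega, ← Nat.cast_add_one,
    show N - 1 - j + 1 = N - j by omega, Nat.cast_sub hj.le] at key
  refine mul_left_cancel₀ (pow_ne_zero j (by norm_num : (-1 : ℝ) ≠ 0)) ?_
  linear_combination -key

noncomputable def esymmMean (s : Multiset ℝ) (j : ℕ) : ℝ :=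
  s.esymm j / (card s).choose j

theorem exists_card_add_one_esymmMean_eq {s : Multiset ℝ} (hs : 0 < card s) :
    ∃ t : Multiset ℝ, card t + 1 = card s ∧
      ∀ j < card s, t.esymmMean j = s.esymmMean j := by
  obtain ⟨t, hts, hrel⟩ := exists_roots_derivative_esymm hs
  refine ⟨t, hts, fun j hj => ?_⟩
  have hchoose : ((card t).choose j : ℝ) * card s = (card s).choose j * (card s - j) := by
    have := Nat.choose_mul_succ_eq (card t) j
    rw [hts] at this
    rw [← Nat.cast_sub hj.le]
    exact_mod_cast this
  have hct : ((card t).choose j : ℝ) ≠ 0 := by exact_mod_cast (Nat.choose_pos (by omega)).ne'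
  have hcs : ((card s).choose j : ℝ) ≠ 0 := by exact_mod_cast (Nat.choose_pos hj.le).ne'
  have hsj : (card s : ℝ) - j ≠ 0 := sub_ne_zero.2 (by exact_mod_cast hj.ne')
  rw [esymmMean, esymmMean, div_eq_div_iff hct hcs]
  apply mul_left_cancel₀ hsj
  linear_combination ((card t).choose j : ℝ) * hrel j hj - t.esymm j * hchoose

theorem esymmMean_mul_le_of_card_eq {s : Multiset ℝ} {r : ℕ} (hs : card s = r + 2) :
    s.esymmMean r * s.esymmMean (r + 2) ≤ s.esymmMean (r + 1) ^ 2 := by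
  classical
  have h := mul_esymm_map_val_le_of_card_eq (A := (univ : Finset s)) (r := r)
    (by rw [card_univ, card_coe, hs]) (fun x : s => (x : ℝ))
  have hc : ((r + 2).choose r : ℝ) = (r + 2) * (r + 1) / 2 := by
    rw [Nat.choose_symm_add, Nat.cast_choose_two]; push_cast; ring
  rw [map_univ_coe] at h
  rw [esymmMean, esymmMean, esymmMean, hs, hc, Nat.choose_self, Nat.choose_succ_self_right]
  rw [div_mul_div_comm, div_pow, div_le_div_iff₀ (by positivity) (by positivity)]
  push_cast
  nlinarith [h]

theorem esymmMean_mul_le_sq {s : Multiset ℝ} {r : ℕ} (hs : r + 2 ≤ card s) :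
    s.esymmMean r * s.esymmMean (r + 2) ≤ s.esymmMean (r + 1) ^ 2 := by
  obtain ⟨d, hd⟩ := Nat.exists_eq_add_of_le hs
  induction d generalizing s with
  | zero => exact esymmMean_mul_le_of_card_eq hd
  | succ d ih =>
    obtain ⟨t, ht, heq⟩ := exists_card_add_one_esymmMean_eq (s := s) (by omega)
    rw [← heq r (by omega), ← heq (r + 1) (by omega), ← heq (r + 2) (by omega)]
    exact ih (by omega) (by omega)

theorem esymm_mul_esymm_lt_sq {s : Multiset ℝ} {r : ℕ} (hs : r + 2 ≤ card s)
    (h : s.esymm (r + 1) ≠ 0) : s.esymm r * s.esymm (r + 2) < s.esymm (r + 1) ^ 2 := by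
  have hN := esymmMean_mul_le_sq hs
  have hc := Nat.choose_mul_choose_add_two_lt_sq hs
  have hpos : ∀ j ≤ card s, (0 : ℝ) < (card s).choose j := fun j hj => by
    exact_mod_cast Nat.choose_pos hj
  have hc0 := hpos r (by omega)
  have hc1 := hpos (r + 1) (by omega)
  have hc2 := hpos (r + 2) hs
  rw [esymmMean, esymmMean, esymmMean, div_mul_div_comm, div_pow,
    div_le_div_iff₀ (by positivity) (by positivity)] at hN
  refine lt_of_mul_lt_mul_right (a := ((card s).choose (r + 1) : ℝ) ^ 2) ?_ (by positivity)
  calc _ ≤ s.esymm (r + 1) ^ 2 * ((card s).choose r * (card s).choose (r + 2)) := hN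
    _ < _ := by gcongr; exact_mod_cast hc

theorem esymm_nonneg_of_cons {a : ℝ} {s : Multiset ℝ} {k : ℕ}
    (h : ∀ j ≤ k, 0 ≤ (a ::ₘ s).esymm j) : ∀ j < k, 0 ≤ s.esymm j := by
  intro j hj
  induction j with
  | zero => simp [esymm]
  | succ r ih =>
    have h0 := ih (by omega)
    have h1 := h (r + 1) hj.le
    have h2 := h (r + 2) hj
    rw [esymm_cons_succ] at h1 h2
    by_contra! hneg
    -- Newton's inequality rules this out.
    have hsq : s.esymm (r + 1) ^ 2 ≤ s.esymm r * s.esymm (r + 2) := by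
      nlinarith [mul_nonneg h1 (neg_nonneg.2 hneg.le), mul_nonneg h2 h0]
    rcases lt_or_ge (card s) (r + 2) with hcard | hcard
    · rw [esymm_eq_zero_of_card_lt hcard] at hsq
      nlinarith
    · exact (esymm_mul_esymm_lt_sq hcard hneg.ne).not_ge hsq

theorem esymm_nonneg_cons_add {a t : ℝ} {s : Multiset ℝ} {k : ℕ}
    (h : ∀ j ≤ k, 0 ≤ (a ::ₘ s).esymm j) (ht : 0 ≤ t) :
    ∀ j ≤ k, 0 ≤ ((a + t) ::ₘ s).esymm j := by
  rintro (_ | j) hj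
  · simp [esymm]
  · have h1 := h (j + 1) hj
    rw [esymm_cons_succ] at h1 ⊢
    nlinarith [esymm_nonneg_of_cons h j hj]

theorem esymm_nonneg_of_rel_le {s t : Multiset ℝ} (hst : Rel (· ≤ ·) s t) {k : ℕ}
    (hs : ∀ j ≤ k, 0 ≤ s.esymm j) : ∀ j ≤ k, 0 ≤ t.esymm j := by
  suffices ∀ u, (∀ j ≤ k, 0 ≤ (u + s).esymm j) → ∀ j ≤ k, 0 ≤ (u + t).esymm j by
    simpa using this 0 (by simpa using hs)
  clear hs
  induction hst with
  | zero => exact fun u hu => hu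
  | @cons a b s t hab _ ih =>
    intro u hu
    rw [add_cons, ← cons_add] at hu
    have hau := ih (a ::ₘ u) hu
    rw [cons_add] at hau
    rw [add_cons]
    simpa only [add_sub_cancel] using esymm_nonneg_cons_add hau (sub_nonneg.2 hab)

end Multiset

theorem nonneg_of_forall_nonneg_add_mul {a b : ℝ} (h : ∀ t ≥ 0, 0 ≤ a + t * b) :
    0 ≤ b := by
  by_contra! hb
  have ht := h ((|a| + 1) / -b) (div_nonneg (by positivity) (by linarith))
  rw [div_mul_eq_mul_div, div_neg, mul_div_cancel_right₀ _ hb.ne] at ht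
  linarith [le_abs_self a]

section Coordinates

variable {ι : Type*} [Fintype ι] [DecidableEq ι]

theorem univ_val_map_add_single (w : ι → ℝ) (i : ι) (t : ℝ) :
    univ.val.map (w + Pi.single i t) = (w i + t) ::ₘ (univ.erase i).val.map w := by
  rw [← insert_erase (mem_univ i), insert_val_of_notMem (notMem_erase i univ), Multiset.map_cons,
    erase_insert_eq_erase, erase_idem]
  congr 1
  · simp
  · refine Multiset.map_congr rfl fun x hx => ?_
    simp [Pi.single_eq_of_ne (ne_of_mem_erase (mem_def.2 hx))]

theorem forall_esymm_add_nonneg_of_succ {v : ι → ℝ} {k : ℕ} (hk : k < Fintype.card ι)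
    (h : ∀ η : ι → ℝ, (∀ i, 0 ≤ η i) → 0 ≤ (univ.val.map (v + η)).esymm (k + 1)) :
    ∀ η : ι → ℝ, (∀ i, 0 ≤ η i) → 0 ≤ (univ.val.map (v + η)).esymm k := by
  intro η hη
  have herase : ∀ i, 0 ≤ ((univ.erase i).val.map (v + η)).esymm k := fun i =>
    nonneg_of_forall_nonneg_add_mul (a := ((univ.erase i).val.map (v + η)).esymm (k + 1)
      + (v + η) i * ((univ.erase i).val.map (v + η)).esymm k) fun t ht => by
      have := h (η + Pi.single i t) fun x => add_nonneg (hη x) (by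
        rcases eq_or_ne x i with rfl | hx <;> simp [*])
      rw [← add_assoc, univ_val_map_add_single, Multiset.esymm_cons_succ] at this
      linarith
  have hsum := sum_esymm_map_val_erase univ (v + η) k
  rw [card_univ] at hsum
  have hpos : (0 : ℝ) < Fintype.card ι - k := sub_pos.2 (by exact_mod_cast hk)
  exact (mul_nonneg_iff_of_pos_left hpos).1 (hsum ▸ sum_nonneg fun i _ => herase i)

theorem esymm_nonneg_of_forall_esymm_add_nonneg {v : ι → ℝ} {k : ℕ}
    (hk : k ≤ Fintype.card ι)
    (h : ∀ η : ι → ℝ, (∀ i, 0 ≤ η i) → 0 ≤ (univ.val.map (v + η)).esymm k) :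
    ∀ j ≤ k, 0 ≤ (univ.val.map v).esymm j := by
  intro j hj
  induction k with
  | zero => simpa [Nat.le_zero.1 hj] using h 0 fun _ => le_rfl
  | succ k ih =>
    rcases hj.lt_or_eq with hj | rfl
    · exact ih (by omega) (forall_esymm_add_nonneg_of_succ (by omega) h) (by omega)
    · simpa using h 0 fun _ => le_rfl

end Coordinates

theorem stmt5_general (n k : ℕ) (hkn : k ≤ n) :
    {lam : Fin n → ℝ | ∀ j, 1 ≤ j → j ≤ k → 0 ≤ esymmS n j lam}
      = {lam : Fin n → ℝ | ∀ eta : Fin n → ℝ, (∀ i, 0 ≤ eta i) → 0 ≤ esymmS n k (lam + eta)} := by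
  have hS : ∀ j (l : Fin n → ℝ), esymmS n j l = (univ.val.map l).esymm j :=
    fun j l => (esymm_map_val l univ j).symm
  ext lam
  simp only [Set.mem_ofPred_eq, hS]
  constructor
  · intro h η hη
    have hrel : Multiset.Rel (· ≤ ·) (univ.val.map lam) (univ.val.map (lam + η)) :=
      Multiset.rel_map.2 (Multiset.rel_refl_of_refl_on fun i _ => le_add_of_nonneg_right (hη i))
    refine Multiset.esymm_nonneg_of_rel_le hrel (fun j hj => ?_) k le_rfl
    rcases j with _ | j
    · simp [Multiset.esymm]
    · exact h (j + 1) (by omega) hj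
  · intro h j _ hjk
    exact esymm_nonneg_of_forall_esymm_add_nonneg (by simpa using hkn) h j hjk

/-- Γ_k = {λ : S_k(λ+η) ≥ 0 for all η ≥ 0}. -/
theorem stmt5 (n k : ℕ) (hk1 : 1 ≤ k) (hkn : k ≤ n) :
    {lam : Fin n → ℝ | ∀ j, 1 ≤ j → j ≤ k → 0 ≤ esymmS n j lam}
      = {lam : Fin n → ℝ | ∀ eta : Fin n → ℝ, (∀ i, 0 ≤ eta i) → 0 ≤ esymmS n k (lam + eta)} :=
  stmt5_general n k hkn
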